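/- In SU(2), let U_θ = diag(e^{iθ}, e^{-iθ}) and U_φ = diag(e^{iφ}, e^{-iφ}), and let ξ ∈ su(2) lie in the real span of j = [[0,1],[-1,0]] and k = [[0,i],[i,0]] with norm ‖ξ‖ (where (j,k) is orthonormal). Then Tr(U_θ e^ξ U_φ e^{-ξ} U_{-θ-φ}) = 2 - 4 sin²(φ) ‖ξ‖² + O(‖ξ‖³) as ξ → 0. -/

import Mathlib

/-!
Write `ξ = a j + b k` and `ρ = √(a² + b²)`. Since `ξ² = -ρ²`, the exponential series splits into
its even and odd parts, `e^{±ξ} = cos ρ ± sinc ρ · ξ`. Cycling `U_{-θ-φ}` to the front of the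
trace removes `θ`, and conjugation by `U_φ` multiplies the off-diagonal entries of `ξ` by
`e^{±2iφ}`; this gives the exact value `2 - 4 sin²φ sin²ρ`. The error `4 sin²φ (ρ² - sin²ρ)` is
then at most `4ρ³`, by `ρ - ρ³/6 ≤ sin ρ ≤ ρ` for `ρ ≤ 1` and trivially for `ρ ≥ 1`.
-/

open Matrix

/-- The diagonal matrix `U_θ = diag(e^{iθ}, e^{-iθ})`. -/
noncomputable def Udiag (θ : ℝ) : Matrix (Fin 2) (Fin 2) ℂ :=
  !![Complex.exp (θ * Complex.I), 0; 0, Complex.exp (-θ * Complex.I)]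

/-- `j = [[0,1],[-1,0]]`. -/
def jMat : Matrix (Fin 2) (Fin 2) ℂ := !![0, 1; -1, 0]

/-- `k = [[0,i],[i,0]]`. -/
def kMat : Matrix (Fin 2) (Fin 2) ℂ := !![0, Complex.I; Complex.I, 0]

/-- Matrix exponential `e^A = ∑ A^m / m!`. -/
noncomputable def matExp (A : Matrix (Fin 2) (Fin 2) ℂ) : Matrix (Fin 2) (Fin 2) ℂ :=
  ∑' m : ℕ, ((m.factorial : ℂ))⁻¹ • A ^ m

lemma Real.hasSum_sinc (ρ : ℝ) :
    HasSum (fun n : ℕ => (-1 : ℝ) ^ n * ρ ^ (2 * n) / (2 * n + 1).factorial) (Real.sinc ρ) := by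
  rcases eq_or_ne ρ 0 with rfl | hρ
  · rw [Real.sinc_zero]
    refine (hasSum_ite_eq 0 (1 : ℝ)).congr_fun fun n => ?_
    rcases n with _ | n <;> simp
  · rw [Real.sinc_of_ne_zero hρ]
    refine ((Real.hasSum_sin ρ).div_const ρ).congr_fun fun n => ?_
    rw [pow_succ]
    field_simp

lemma Real.sinc_mul_self (x : ℝ) : Real.sinc x * x = Real.sin x := by
  rcases eq_or_ne x 0 with rfl | hx
  · simp
  · rw [Real.sinc_of_ne_zero hx, div_mul_cancel₀ _ hx]

lemma sq_sub_sin_sq_le_pow_three {ρ : ℝ} (hρ : 0 ≤ ρ) : ρ ^ 2 - Real.sin ρ ^ 2 ≤ ρ ^ 3 := by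
  rcases le_total ρ 1 with hρ1 | hρ1
  · have hsin_le : Real.sin ρ ≤ ρ := Real.sin_le hρ
    have hsub_cube : ρ - ρ ^ 3 / 6 ≤ Real.sin ρ := Real.sin_ge_sub_cube hρ
    nlinarith [pow_le_pow_left₀ hρ hρ1 4, pow_nonneg hρ 3]
  · nlinarith [sq_nonneg (Real.sin ρ), pow_le_pow_right₀ hρ1 (show 2 ≤ 3 by norm_num)]

lemma smul_jMat_add_smul_kMat (a b : ℝ) :
    (a : ℂ) • jMat + (b : ℂ) • kMat = !![0, a + b * Complex.I; -a + b * Complex.I, 0] := by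
  ext i j
  fin_cases i <;> fin_cases j <;> simp [jMat, kMat]

lemma antidiag_mul_self (z w : ℂ) :
    !![0, z; w, 0] * !![0, z; w, 0] = (z * w) • (1 : Matrix (Fin 2) (Fin 2) ℂ) := by
  rw [mul_fin_two, one_fin_two, smul_of, smul_cons]
  simp [mul_comm]

lemma matExp_eq_of_mul_self_eq {ξ : Matrix (Fin 2) (Fin 2) ℂ} {ρ : ℝ}
    (h : ξ * ξ = (-ρ ^ 2 : ℂ) • 1) :
    matExp ξ = (Real.cos ρ : ℂ) • 1 + (Real.sinc ρ : ℂ) • ξ := by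
  have pow_even (n : ℕ) : ξ ^ (2 * n) = ((-1) ^ n * (ρ : ℂ) ^ (2 * n)) • 1 := by
    rw [pow_mul, sq, h, smul_pow, one_pow, neg_pow, pow_mul]
  have pow_odd (n : ℕ) : ξ ^ (2 * n + 1) = ((-1) ^ n * (ρ : ℂ) ^ (2 * n)) • ξ := by
    rw [pow_succ, pow_even, smul_mul_assoc, one_mul]
  refine HasSum.tsum_eq (HasSum.even_add_odd ?_ ?_)
  · rw [Complex.ofReal_cos]
    refine ((Complex.hasSum_cos ρ).smul_const (1 : Matrix (Fin 2) (Fin 2) ℂ)).congr_fun fun n => ?_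
    rw [pow_even, smul_smul]
    congr 1
    field_simp
  · have hsinc := (Complex.hasSum_ofReal.mpr (Real.hasSum_sinc ρ)).smul_const ξ
    refine hsinc.congr_fun fun n => ?_
    rw [pow_odd, smul_smul]
    push_cast
    congr 1
    field_simp

lemma Udiag_mul_Udiag (α β : ℝ) : Udiag α * Udiag β = Udiag (α + β) := by
  simp only [Udiag, mul_fin_two, mul_zero, zero_mul, add_zero, zero_add, ← Complex.exp_add]
  push_cast
  ring_nf

lemma trace_Udiag_mul_mul_Udiag (θ φ : ℝ) (A B : Matrix (Fin 2) (Fin 2) ℂ) :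
    trace (Udiag θ * A * Udiag φ * B * Udiag (-θ - φ)) = trace (A * Udiag φ * B * Udiag (-φ)) := by
  rw [show Udiag θ * A * Udiag φ * B = Udiag θ * (A * Udiag φ * B) by simp only [mul_assoc]]
  rw [trace_mul_cycle, Udiag_mul_Udiag, trace_mul_comm, show -θ - φ + θ = -φ by ring]

lemma trace_scalar_add_antidiag_conj_Udiag (c s z w : ℂ) (φ : ℝ) :
    trace ((c • 1 + s • !![0, z; w, 0]) * Udiag φ * (c • 1 - s • !![0, z; w, 0]) * Udiag (-φ))
      = 2 * c ^ 2 - 2 * s ^ 2 * (z * w) * Complex.cos (2 * φ) := by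
  set u := Complex.exp (φ * Complex.I)
  have hu : u ≠ 0 := Complex.exp_ne_zero _
  have hu_neg : Complex.exp (-φ * Complex.I) = u⁻¹ := by rw [neg_mul, Complex.exp_neg]
  have hcos : Complex.cos (2 * φ) = (u ^ 2 + (u⁻¹) ^ 2) / 2 := by
    rw [Complex.cos, ← hu_neg, ← Complex.exp_nat_mul, ← Complex.exp_nat_mul]
    ring_nf
  simp only [Udiag, one_fin_two, smul_of, smul_cons, smul_empty, smul_eq_mul, mul_one,
    of_add_of, of_sub_of, cons_add_cons, cons_sub_cons, empty_add_empty, empty_sub_empty,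
    mul_fin_two, trace_fin_two_of, Complex.ofReal_neg, neg_neg, hu_neg, hcos]
  field_simp
  ring

lemma trace_Udiag_matExp_commutator (θ φ a b : ℝ) :
    trace (Udiag θ * matExp ((a : ℂ) • jMat + (b : ℂ) • kMat) * Udiag φ *
        matExp (-((a : ℂ) • jMat + (b : ℂ) • kMat)) * Udiag (-θ - φ))
      = ((2 - 4 * Real.sin φ ^ 2 * Real.sin √(a ^ 2 + b ^ 2) ^ 2 : ℝ) : ℂ) := by
  set ρ := √(a ^ 2 + b ^ 2)
  set z : ℂ := a + b * Complex.I
  set w : ℂ := -a + b * Complex.I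
  have hzw : z * w = -ρ ^ 2 := by
    have hρ : ρ ^ 2 = a ^ 2 + b ^ 2 := Real.sq_sqrt (by positivity)
    have hρ' : (ρ : ℂ) ^ 2 = a ^ 2 + b ^ 2 := by exact_mod_cast hρ
    linear_combination (b : ℂ) ^ 2 * Complex.I_sq + hρ'
  have hξ := smul_jMat_add_smul_kMat a b
  have hsq : !![0, z; w, 0] * !![0, z; w, 0] = (-ρ ^ 2 : ℂ) • 1 := by
    rw [antidiag_mul_self, hzw]
  have hsq_neg : (-!![0, z; w, 0]) * (-!![0, z; w, 0]) = (-ρ ^ 2 : ℂ) • 1 := by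
    rw [neg_mul_neg, hsq]
  have hcos : Complex.cos (2 * φ) = ((1 - 2 * Real.sin φ ^ 2 : ℝ) : ℂ) := by
    push_cast
    exact Complex.cos_two_mul_eq_one_sub _
  rw [hξ, matExp_eq_of_mul_self_eq hsq, matExp_eq_of_mul_self_eq hsq_neg, smul_neg,
    ← sub_eq_add_neg, trace_Udiag_mul_mul_Udiag, trace_scalar_add_antidiag_conj_Udiag, hzw, hcos]
  have hreal : 2 * Real.cos ρ ^ 2 + 2 * Real.sinc ρ ^ 2 * ρ ^ 2 * (1 - 2 * Real.sin φ ^ 2)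
      = 2 - 4 * Real.sin φ ^ 2 * Real.sin ρ ^ 2 := by
    rw [Real.cos_sq', ← Real.sinc_mul_self ρ]
    ring
  rw [← hreal]
  push_cast
  ring

/-- For `ξ = a·j + b·k` with `‖ξ‖² = a² + b²`,
`Tr(U_θ e^ξ U_φ e^{-ξ} U_{-θ-φ}) = 2 - 4 sin²(φ)(a²+b²) + O((a²+b²)^{3/2})` as `ξ → 0`. -/
theorem stmt_8 (θ φ : ℝ) :
    ∃ C > 0, ∃ δ > 0, ∀ a b : ℝ, Real.sqrt (a ^ 2 + b ^ 2) ≤ δ →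
      ‖Matrix.trace
          (Udiag θ * matExp ((a : ℂ) • jMat + (b : ℂ) • kMat) * Udiag φ *
            matExp (-((a : ℂ) • jMat + (b : ℂ) • kMat)) * Udiag (-θ - φ))
        - ((2 - 4 * Real.sin φ ^ 2 * (a ^ 2 + b ^ 2) : ℝ) : ℂ)‖
        ≤ C * Real.sqrt (a ^ 2 + b ^ 2) ^ 3 := by
  refine ⟨4, by norm_num, 1, one_pos, fun a b _ => ?_⟩
  rw [trace_Udiag_matExp_commutator, ← Complex.ofReal_sub, Complex.norm_real, Real.norm_eq_abs]
  set ρ := √(a ^ 2 + b ^ 2)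
  rw [show a ^ 2 + b ^ 2 = ρ ^ 2 from (Real.sq_sqrt (by positivity)).symm]
  have hρ : 0 ≤ ρ := Real.sqrt_nonneg _
  have hgap : 0 ≤ ρ ^ 2 - Real.sin ρ ^ 2 := sub_nonneg.mpr Real.sin_sq_le_sq
  calc |2 - 4 * Real.sin φ ^ 2 * Real.sin ρ ^ 2 - (2 - 4 * Real.sin φ ^ 2 * ρ ^ 2)|
      = 4 * Real.sin φ ^ 2 * (ρ ^ 2 - Real.sin ρ ^ 2) := by
        rw [abs_of_nonneg (by nlinarith [sq_nonneg (Real.sin φ)])]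
        ring
    _ ≤ 4 * 1 * ρ ^ 3 := by
        gcongr
        · exact Real.sin_sq_le_one φ
        · exact sq_sub_sin_sq_le_pow_three hρ
    _ = 4 * ρ ^ 3 := by ring
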